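/- arXiv:2501.12773 — 2 statements merged into one kernel-verified Lean document; each statement's English description precedes it below -/
import Mathlib

section
/- If C_ss is positive definite and Z ∈ ℂ^{m×n} has rank n (full column rank), then as the noise scaling goes to zero, i.e., y = √ρ Z s + w with C_ww = σ² I fixed and ρ → ∞, the LMMSE error covariance C_ss − ρ C_ss Z^H (ρ Z C_ss Z^H + σ² I)^{-1} Z C_ss converges to the zero matrix. -/
/-!
By the push-through identity, for `ρ > 0` the error covariance is the inverse of the
information matrix `C_ss⁻¹ + ρ σ⁻² ZᴴZ`. Full column rank makes `ZᴴZ` invertible, so this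
equals `ρ⁻¹ (ρ⁻¹ C_ss⁻¹ + σ⁻² ZᴴZ)⁻¹`, where the inverse converges to `σ² (ZᴴZ)⁻¹` and the
prefactor to `0`.
-/

open ComplexOrder Matrix Filter Topology

variable {m n : Type*}

namespace Matrix

theorem ker_mulVecLin_eq_bot_of_rank_eq_card [Fintype n] {K : Type*} [Field K]
    (A : Matrix m n K) (h : A.rank = Fintype.card n) : LinearMap.ker A.mulVecLin = ⊥ := by
  have := LinearMap.finrank_range_add_finrank_ker A.mulVecLin
  rw [Module.finrank_fintype_fun_eq_card, ← rank, h] at this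
  exact Submodule.finrank_eq_zero.mp (by omega)

theorem isUnit_conjTranspose_mul_self_of_rank_eq_card [Fintype m] [Fintype n] [DecidableEq n]
    {K : Type*} [Field K] [PartialOrder K] [StarRing K] [StarOrderedRing K] (A : Matrix m n K)
    (h : A.rank = Fintype.card n) : IsUnit (Aᴴ * A) := by
  rw [← mulVec_injective_iff_isUnit, ← coe_mulVecLin, ← LinearMap.ker_eq_bot,
    ker_mulVecLin_conjTranspose_mul_self]
  exact A.ker_mulVecLin_eq_bot_of_rank_eq_card h

theorem isUnit_smul_add_smul_one [Fintype m] [DecidableEq m] {𝕜 : Type*} [RCLike 𝕜]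
    {A : Matrix m m 𝕜} (hA : A.PosSemidef) {ρ s : 𝕜} (hρ : 0 ≤ ρ) (hs : 0 < s) :
    IsUnit (ρ • A + s • 1) :=
  (PosDef.posSemidef_add (hA.smul hρ) (PosDef.one.smul hs)).isUnit

theorem inv_smul₀ [Fintype n] [DecidableEq n] {K : Type*} [Field K] {c : K} (hc : c ≠ 0)
    (A : Matrix n n K) : (c • A)⁻¹ = c⁻¹ • A⁻¹ := by
  by_cases hA : IsUnit A.det
  · exact inv_smul' A (Units.mk0 c hc) hA
  · have hcA : ¬IsUnit (c • A).det := by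
      rwa [det_smul, IsUnit.mul_iff, and_iff_right (pow_ne_zero _ hc).isUnit]
    rw [nonsing_inv_apply_not_isUnit _ hA, nonsing_inv_apply_not_isUnit _ hcA, smul_zero]

theorem tendsto_inv_add_smul_of_tendsto_cobounded [Fintype n] [DecidableEq n] {𝕜 ι : Type*}
    [NormedField 𝕜] {l : Filter ι} {c : ι → 𝕜} (hc : Tendsto c l (Bornology.cobounded 𝕜))
    (A : Matrix n n 𝕜) {K : Matrix n n 𝕜} (hK : IsUnit K.det) :
    Tendsto (fun i => (A + c i • K)⁻¹) l (𝓝 0) := by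
  have hc_inv : Tendsto (fun i => (c i)⁻¹) l (𝓝 0) := tendsto_inv₀_cobounded.comp hc
  have hK_inv : ContinuousAt Inv.inv K :=
    continuousAt_matrix_inv K (by rw [Ring.inverse_eq_inv']; exact continuousAt_inv₀ hK.ne_zero)
  have hlim : Tendsto (fun i => (c i)⁻¹ • ((c i)⁻¹ • A + K)⁻¹) l (𝓝 0) := by
    simpa using
      hc_inv.smul (hK_inv.tendsto.comp (by simpa using (hc_inv.smul_const A).add_const K))
  refine hlim.congr' ?_
  filter_upwards [hc.eventually_ne_cobounded 0] with i hi
  rw [← inv_smul₀ hi, smul_add, smul_smul, mul_inv_cancel₀ hi, one_smul]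

end Matrix

section LMMSE

variable [Fintype m] [Fintype n] [DecidableEq m] {K : Type*} [Field K] [StarRing K]

/-- The LMMSE error covariance for `y = √ρ Z x + w` with `C = C_xx` and `C_ww = s • 1`. -/
noncomputable def lmmseErrorCov (C : Matrix n n K) (Z : Matrix m n K) (ρ s : K) :
    Matrix n n K :=
  C - ρ • (C * Zᴴ * (ρ • (Z * C * Zᴴ) + s • 1)⁻¹ * Z * C)

theorem lmmseErrorCov_eq_inv [DecidableEq n] {C : Matrix n n K} (Z : Matrix m n K) {ρ s : K}
    (hC : IsUnit C.det) (hs : s ≠ 0) (hM : IsUnit (ρ • (Z * C * Zᴴ) + s • 1).det) :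
    lmmseErrorCov C Z ρ s = (C⁻¹ + ρ • (s⁻¹ • (Zᴴ * Z)))⁻¹ := by
  set M := ρ • (Z * C * Zᴴ) + s • (1 : Matrix m m K)
  set N := C⁻¹ + ρ • (s⁻¹ • (Zᴴ * Z))
  have hNCZ : N * C * Zᴴ = s⁻¹ • (Zᴴ * M) := by
    simp only [N, M, Matrix.add_mul, Matrix.mul_add, Matrix.smul_mul, Matrix.mul_smul, smul_add,
      nonsing_inv_mul _ hC, Matrix.one_mul, Matrix.mul_one, smul_smul, Matrix.mul_assoc,
      inv_mul_cancel₀ hs, one_smul, add_comm, mul_comm]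
  symm
  apply inv_eq_right_inv
  calc N * lmmseErrorCov C Z ρ s = N * C - ρ • (N * C * Zᴴ * M⁻¹ * Z * C) := by
        simp only [lmmseErrorCov, Matrix.mul_sub, Matrix.mul_smul, Matrix.mul_assoc, M]
    _ = N * C - ρ • (s⁻¹ • (Zᴴ * Z * C)) := by
        rw [hNCZ, Matrix.smul_mul, Matrix.smul_mul, Matrix.smul_mul, Matrix.mul_assoc Zᴴ M,
          mul_nonsing_inv _ hM, Matrix.mul_one]
    _ = 1 := by
        simp only [N, Matrix.add_mul, nonsing_inv_mul _ hC, Matrix.smul_mul, add_sub_cancel_right]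

end LMMSE

/-- If `C_ss ≻ 0` and `Z` has full column rank, then as `ρ → ∞` the LMMSE error
covariance `C_ss − ρ C_ss Zᴴ (ρ Z C_ss Zᴴ + σ² I)⁻¹ Z C_ss` converges to `0`. -/
theorem stmt8 {m n : ℕ} (Z : Matrix (Fin m) (Fin n) ℂ)
    (Css : Matrix (Fin n) (Fin n) ℂ) (σ : ℝ) (hσ : 0 < σ)
    (hss : Css.PosDef) (hrank : Z.rank = n) :
    Tendsto (fun ρ : ℝ =>
        Css - (ρ : ℂ) •
          (Css * Zᴴ * ((ρ : ℂ) • (Z * Css * Zᴴ) + (σ ^ 2 : ℂ) • (1 : Matrix (Fin m) (Fin m) ℂ))⁻¹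
            * Z * Css))
      atTop (nhds 0) := by
  change Tendsto (fun ρ : ℝ => lmmseErrorCov Css Z ρ ((σ : ℂ) ^ 2)) atTop (𝓝 0)
  have hs : (0 : ℂ) < (σ : ℂ) ^ 2 := by exact_mod_cast pow_pos hσ 2
  have hK : IsUnit (((σ : ℂ) ^ 2)⁻¹ • (Zᴴ * Z)).det := by
    rw [det_smul]
    exact (pow_ne_zero _ (inv_ne_zero hs.ne')).isUnit.mul <| (isUnit_iff_isUnit_det _).mp <|
      isUnit_conjTranspose_mul_self_of_rank_eq_card Z (by simpa using hrank)
  refine (tendsto_inv_add_smul_of_tendsto_cobounded (c := fun ρ : ℝ => (ρ : ℂ))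
    (RCLike.tendsto_ofReal_atTop_cobounded ℂ) Css⁻¹ hK).congr' ?_
  filter_upwards [eventually_ge_atTop 0] with ρ hρ
  have hM := isUnit_smul_add_smul_one (hss.posSemidef.mul_mul_conjTranspose_same Z)
    (Complex.zero_le_real.mpr hρ) hs
  exact (lmmseErrorCov_eq_inv Z ((isUnit_iff_isUnit_det _).mp hss.isUnit) hs.ne'
    ((isUnit_iff_isUnit_det _).mp hM)).symm
end

section
/- The two-stage estimator ŝ_G = E[s] + C_{s u} C_{u u}^{-1} û composed of an LMMSE estimate û = C_{u y} C_{yy}^{-1}(y − E[y]) followed by LMMSE estimation of s from û has error covariance C_ss − C_{sy} C_{yy}^{-1} C_{uy}^H (C_{uy} C_{yy}^{-1} C_{uy}^H)^{-1} C_{uy} C_{yy}^{-1} C_{sy}^H. -/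
/-!
By bilinearity, the error covariance of any linear estimator `A y` of `s` is
`Css - Csy Aᴴ - A Csyᴴ + A Cyy Aᴴ`. For the two-stage gain `A = Csy Cyy⁻¹ Cuyᴴ B⁻¹ Cuy Cyy⁻¹`,
`B = Cuy Cyy⁻¹ Cuyᴴ`, the identity `B⁻¹ B B⁻¹ = B⁻¹` gives `A Cyy Aᴴ = Csy Aᴴ` (the error is
orthogonal to the estimate), and `Csy Aᴴ` is Hermitian, so the covariance collapses to
`Css - Csy Aᴴ`.
-/

open ComplexOrder MeasureTheory Matrix BigOperators

section TwoStage

variable {𝕜 ι κ μ : Type*} [CommRing 𝕜] [StarRing 𝕜] [Fintype κ]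

def errorCov (Css : Matrix ι ι 𝕜) (Csy : Matrix ι κ 𝕜) (Cyy : Matrix κ κ 𝕜) (A : Matrix ι κ 𝕜) :
    Matrix ι ι 𝕜 :=
  Css - Csy * Aᴴ - A * Csyᴴ + A * Cyy * Aᴴ

theorem errorCov_eq_of_orthogonal {Css : Matrix ι ι 𝕜} {Csy A : Matrix ι κ 𝕜}
    {Cyy : Matrix κ κ 𝕜} (horth : A * Cyy * Aᴴ = Csy * Aᴴ) (hherm : (Csy * Aᴴ)ᴴ = Csy * Aᴴ) :
    errorCov Css Csy Cyy A = Css - Csy * Aᴴ := by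
  rw [errorCov, horth, ← hherm, conjTranspose_mul, conjTranspose_conjTranspose]
  abel

variable [DecidableEq κ] [Fintype μ] [DecidableEq μ]

theorem errorCov_twoStage (Css : Matrix ι ι 𝕜) (Csy : Matrix ι κ 𝕜) {Cyy : Matrix κ κ 𝕜}
    {Cuy : Matrix μ κ 𝕜} (hyy : Cyy.IsHermitian) (hyy_unit : IsUnit Cyy)
    (hinv : IsUnit (Cuy * Cyy⁻¹ * Cuyᴴ)) :
    errorCov Css Csy Cyy (Csy * Cyy⁻¹ * Cuyᴴ * (Cuy * Cyy⁻¹ * Cuyᴴ)⁻¹ * (Cuy * Cyy⁻¹)) =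
      Css - Csy * Cyy⁻¹ * Cuyᴴ * (Cuy * Cyy⁻¹ * Cuyᴴ)⁻¹ * Cuy * Cyy⁻¹ * Csyᴴ := by
  set B := Cuy * Cyy⁻¹ * Cuyᴴ
  set A := Csy * Cyy⁻¹ * Cuyᴴ * B⁻¹ * (Cuy * Cyy⁻¹)
  have hBinv : B⁻¹.IsHermitian := (isHermitian_mul_mul_conjTranspose Cuy hyy.inv).inv
  have hAH : Aᴴ = Cyy⁻¹ * Cuyᴴ * B⁻¹ * Cuy * Cyy⁻¹ * Csyᴴ := by
    simp only [A, conjTranspose_mul, hyy.inv.eq, hBinv.eq, conjTranspose_conjTranspose,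
      Matrix.mul_assoc]
  have hgain : Csy * Aᴴ = Csy * Cyy⁻¹ * Cuyᴴ * B⁻¹ * Cuy * Cyy⁻¹ * Csyᴴ := by
    simp only [hAH, Matrix.mul_assoc]
  have hherm : (Csy * Aᴴ)ᴴ = Csy * Aᴴ := by
    rw [hgain]
    simp only [conjTranspose_mul, hyy.inv.eq, hBinv.eq, conjTranspose_conjTranspose,
      Matrix.mul_assoc]
  have hACyy : A * Cyy = Csy * Cyy⁻¹ * Cuyᴴ * B⁻¹ * Cuy := by
    simp only [A, Matrix.mul_assoc, nonsing_inv_mul _ ((isUnit_iff_isUnit_det _).mp hyy_unit),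
      Matrix.mul_one]
  have horth : A * Cyy * Aᴴ = Csy * Aᴴ :=
    calc A * Cyy * Aᴴ = Csy * Cyy⁻¹ * Cuyᴴ * B⁻¹ * (B * (B⁻¹ * (Cuy * Cyy⁻¹ * Csyᴴ))) := by
          simp only [hACyy, hAH, B, Matrix.mul_assoc]
      _ = Csy * Aᴴ := by
          rw [mul_nonsing_inv_cancel_left _ _ ((isUnit_iff_isUnit_det _).mp hinv), hgain]
          simp only [Matrix.mul_assoc]
  rw [errorCov_eq_of_orthogonal horth hherm, hgain]

end TwoStage

section CrossCovariance

variable {Ω 𝕜 ι κ ι' κ' : Type*} [MeasurableSpace Ω] {P : Measure Ω} [RCLike 𝕜]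

noncomputable def crossCov (P : Measure Ω) (x : Ω → ι → 𝕜) (z : Ω → κ → 𝕜) : Matrix ι κ 𝕜 :=
  Matrix.of fun i j => ∫ ω, x ω i * star (z ω j) ∂P

def IntegrableCrossMoments (P : Measure Ω) (x : Ω → ι → 𝕜) (z : Ω → κ → 𝕜) : Prop :=
  ∀ i j, Integrable (fun ω => x ω i * star (z ω j)) P

theorem IntegrableCrossMoments.symm {x : Ω → ι → 𝕜} {z : Ω → κ → 𝕜}
    (h : IntegrableCrossMoments P x z) : IntegrableCrossMoments P z x := fun i j => by
  simpa [RCLike.star_def, mul_comm] using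
    (RCLike.conjCLE (K := 𝕜) : 𝕜 →L[ℝ] 𝕜).integrable_comp (h j i)

theorem conjTranspose_crossCov (x : Ω → ι → 𝕜) (z : Ω → κ → 𝕜) :
    (crossCov P x z)ᴴ = crossCov P z x := by
  ext i j
  simp only [crossCov, conjTranspose_apply, of_apply, RCLike.star_def, ← integral_conj, map_mul,
    RCLike.conj_conj, mul_comm]

section mulVec

variable [Fintype ι] [Fintype κ] {x : Ω → ι → 𝕜} {z : Ω → κ → 𝕜}

theorem mulVec_mul_star_mulVec (A : Matrix ι' ι 𝕜) (B : Matrix κ' κ 𝕜) (v : ι → 𝕜) (w : κ → 𝕜)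
    (i : ι') (j : κ') :
    (A *ᵥ v) i * star ((B *ᵥ w) j) = ∑ k, ∑ l, A i k * star (B j l) * (v k * star (w l)) := by
  simp only [mulVec, dotProduct, star_sum, star_mul', Finset.sum_mul, Finset.mul_sum]
  rw [Finset.sum_comm]
  exact Finset.sum_congr rfl fun k _ => Finset.sum_congr rfl fun l _ => by ring

theorem IntegrableCrossMoments.mulVec (h : IntegrableCrossMoments P x z)
    (A : Matrix ι' ι 𝕜) (B : Matrix κ' κ 𝕜) :
    IntegrableCrossMoments P (fun ω => A *ᵥ x ω) (fun ω => B *ᵥ z ω) := fun i j => by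
  simp only [mulVec_mul_star_mulVec]
  exact integrable_finsetSum _ fun k _ => integrable_finsetSum _ fun l _ => (h k l).const_mul _

theorem crossCov_mulVec (h : IntegrableCrossMoments P x z) (A : Matrix ι' ι 𝕜)
    (B : Matrix κ' κ 𝕜) :
    crossCov P (fun ω => A *ᵥ x ω) (fun ω => B *ᵥ z ω) = A * crossCov P x z * Bᴴ := by
  ext i j
  simp only [crossCov, of_apply, mulVec_mul_star_mulVec, mul_apply, conjTranspose_apply,
    Finset.sum_mul]
  rw [integral_finsetSum _ fun k _ => integrable_finsetSum _ fun l _ => (h k l).const_mul _,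
    Finset.sum_comm]
  refine Finset.sum_congr rfl fun k _ => ?_
  rw [integral_finsetSum _ fun l _ => (h k l).const_mul _]
  exact Finset.sum_congr rfl fun l _ => by rw [integral_const_mul]; ring

end mulVec

theorem IntegrableCrossMoments.sumElim {s : Ω → ι → 𝕜} {y : Ω → κ → 𝕜}
    (hss : IntegrableCrossMoments P s s) (hsy : IntegrableCrossMoments P s y)
    (hyy : IntegrableCrossMoments P y y) :
    IntegrableCrossMoments P (fun ω => s ω ⊕ᵥ y ω) (fun ω => s ω ⊕ᵥ y ω)
  | .inl i, .inl j => hss i j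
  | .inl i, .inr j => hsy i j
  | .inr i, .inl j => hsy.symm i j
  | .inr i, .inr j => hyy i j

theorem crossCov_sumElim (s : Ω → ι → 𝕜) (y : Ω → κ → 𝕜) :
    crossCov P (fun ω => s ω ⊕ᵥ y ω) (fun ω => s ω ⊕ᵥ y ω) =
      fromBlocks (crossCov P s s) (crossCov P s y) (crossCov P s y)ᴴ (crossCov P y y) := by
  rw [conjTranspose_crossCov]
  ext (i | i) (j | j) <;> rfl

-- The error `s - A y` is the image of the joint vector `(s, y)` under `[1, -A]`.
theorem crossCov_sub_mulVec [Fintype ι] [DecidableEq ι] [Fintype κ] {s : Ω → ι → 𝕜}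
    {y : Ω → κ → 𝕜} (hss : IntegrableCrossMoments P s s) (hsy : IntegrableCrossMoments P s y)
    (hyy : IntegrableCrossMoments P y y) (A : Matrix ι κ 𝕜) :
    crossCov P (fun ω => s ω - A *ᵥ y ω) (fun ω => s ω - A *ᵥ y ω) =
      errorCov (crossCov P s s) (crossCov P s y) (crossCov P y y) A := by
  have hjoint : ∀ ω, s ω - A *ᵥ y ω = fromCols 1 (-A) *ᵥ (s ω ⊕ᵥ y ω) := fun ω => by
    rw [fromCols_mulVec_sumElim, one_mulVec, neg_mulVec, sub_eq_add_neg]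
  simp only [hjoint, crossCov_mulVec (hss.sumElim hsy hyy), crossCov_sumElim,
    fromCols_mul_fromBlocks, conjTranspose_fromCols_eq_fromRows_conjTranspose,
    fromCols_mul_fromRows, conjTranspose_one, conjTranspose_neg, Matrix.one_mul, Matrix.mul_one,
    Matrix.neg_mul, Matrix.mul_neg, Matrix.add_mul, errorCov]
  abel

end CrossCovariance

theorem stmt11_general {Ω : Type*} [MeasurableSpace Ω] (P : Measure Ω)
    {n p m : ℕ}
    (Css : Matrix (Fin n) (Fin n) ℂ) (Csy : Matrix (Fin n) (Fin m) ℂ)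
    (Cyy : Matrix (Fin m) (Fin m) ℂ) (Cuy : Matrix (Fin p) (Fin m) ℂ)
    (s : Ω → Fin n → ℂ) (y : Ω → Fin m → ℂ)
    (hintss : ∀ i j, Integrable (fun ω => s ω i * star (s ω j)) P)
    (hintsy : ∀ i j, Integrable (fun ω => s ω i * star (y ω j)) P)
    (hintyy : ∀ i j, Integrable (fun ω => y ω i * star (y ω j)) P)
    (hCss : ∀ i j, ∫ ω, s ω i * star (s ω j) ∂P = Css i j)
    (hCsy : ∀ i j, ∫ ω, s ω i * star (y ω j) ∂P = Csy i j)
    (hCyy : ∀ i j, ∫ ω, y ω i * star (y ω j) ∂P = Cyy i j)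
    (hyy : Cyy.PosDef)
    (hinv : IsUnit (Cuy * Cyy⁻¹ * Cuyᴴ))
    (uhat : Ω → Fin p → ℂ)
    (huhat : ∀ ω, uhat ω = (Cuy * Cyy⁻¹).mulVec (y ω))
    (shatG : Ω → Fin n → ℂ)
    (hshatG : ∀ ω, shatG ω =
      ((Csy * Cyy⁻¹ * Cuyᴴ) * (Cuy * Cyy⁻¹ * Cuyᴴ)⁻¹).mulVec (uhat ω)) :
    ∀ i j, ∫ ω, (s ω i - shatG ω i) * star (s ω j - shatG ω j) ∂P =
      (Css - Csy * Cyy⁻¹ * Cuyᴴ * (Cuy * Cyy⁻¹ * Cuyᴴ)⁻¹ * Cuy * Cyy⁻¹ * Csyᴴ) i j := by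
  have hshat : shatG = fun ω =>
      (Csy * Cyy⁻¹ * Cuyᴴ * (Cuy * Cyy⁻¹ * Cuyᴴ)⁻¹ * (Cuy * Cyy⁻¹)) *ᵥ y ω := by
    funext ω
    rw [hshatG, huhat, mulVec_mulVec]
  have hcov := crossCov_sub_mulVec hintss hintsy hintyy
    (Csy * Cyy⁻¹ * Cuyᴴ * (Cuy * Cyy⁻¹ * Cuyᴴ)⁻¹ * (Cuy * Cyy⁻¹))
  rw [show crossCov P s s = Css from Matrix.ext hCss,
    show crossCov P s y = Csy from Matrix.ext hCsy, show crossCov P y y = Cyy from Matrix.ext hCyy,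
    errorCov_twoStage Css Csy hyy.isHermitian hyy.isUnit hinv] at hcov
  intro i j
  subst hshat
  exact congrFun₂ hcov i j

/-- The two-stage (correlated-grouping) estimator
`ŝ_G = C_{sû} C_{ûû}⁻¹ û` with `û = C_{uy} C_{yy}⁻¹ y` (all vectors zero mean) has error
covariance `C_ss − C_sy C_yy⁻¹ C_uyᴴ (C_uy C_yy⁻¹ C_uyᴴ)⁻¹ C_uy C_yy⁻¹ C_syᴴ`. -/
theorem stmt11 {Ω : Type*} [MeasurableSpace Ω] (P : Measure Ω) [IsProbabilityMeasure P]
    {n p m : ℕ}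
    (Css : Matrix (Fin n) (Fin n) ℂ) (Csy : Matrix (Fin n) (Fin m) ℂ)
    (Cyy : Matrix (Fin m) (Fin m) ℂ) (Cuy : Matrix (Fin p) (Fin m) ℂ)
    (s : Ω → Fin n → ℂ) (y : Ω → Fin m → ℂ)
    (hmeass : Measurable s) (hmeasy : Measurable y)
    (hints : ∀ i, Integrable (fun ω => s ω i) P)
    (hinty : ∀ j, Integrable (fun ω => y ω j) P)
    (hintss : ∀ i j, Integrable (fun ω => s ω i * star (s ω j)) P)
    (hintsy : ∀ i j, Integrable (fun ω => s ω i * star (y ω j)) P)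
    (hintyy : ∀ i j, Integrable (fun ω => y ω i * star (y ω j)) P)
    (hms : ∀ i, ∫ ω, s ω i ∂P = 0)
    (hmy : ∀ j, ∫ ω, y ω j ∂P = 0)
    (hCss : ∀ i j, ∫ ω, s ω i * star (s ω j) ∂P = Css i j)
    (hCsy : ∀ i j, ∫ ω, s ω i * star (y ω j) ∂P = Csy i j)
    (hCyy : ∀ i j, ∫ ω, y ω i * star (y ω j) ∂P = Cyy i j)
    (hyy : Cyy.PosDef)
    (hinv : IsUnit (Cuy * Cyy⁻¹ * Cuyᴴ))
    (uhat : Ω → Fin p → ℂ)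
    (huhat : ∀ ω, uhat ω = (Cuy * Cyy⁻¹).mulVec (y ω))
    (shatG : Ω → Fin n → ℂ)
    (hshatG : ∀ ω, shatG ω =
      ((Csy * Cyy⁻¹ * Cuyᴴ) * (Cuy * Cyy⁻¹ * Cuyᴴ)⁻¹).mulVec (uhat ω)) :
    ∀ i j, ∫ ω, (s ω i - shatG ω i) * star (s ω j - shatG ω j) ∂P =
      (Css - Csy * Cyy⁻¹ * Cuyᴴ * (Cuy * Cyy⁻¹ * Cuyᴴ)⁻¹ * Cuy * Cyy⁻¹ * Csyᴴ) i j :=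
  stmt11_general P Css Csy Cyy Cuy s y hintss hintsy hintyy hCss hCsy hCyy hyy hinv uhat huhat shatG
    hshatG
end
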